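/- arXiv:1207.1536 — 3 statements merged into one kernel-verified Lean document; each statement's English description precedes it below -/
import Mathlib

section
/- Let X be a metric space and f : X → X a continuous map. Then f is topologically transitive and has a dense set of periodic points if and only if f is indecomposable and has a dense set of periodic points. -/
/-!
Both directions rest on one observation: if `A` is closed and invariant and the periodic points
are dense, then every open set that some iterate maps into `A` already lies in `A`, because each
periodic point returns to itself from its own iterates.

Transitivity gives an open set inside `A` that is mapped into `B` by an iterate, hence lies in
`A ∩ B`. Conversely, applying indecomposability to the orbit closures of `U` and `V` yields an open
set `W` in both; an open piece of `V` is mapped into `W` by an iterate, hence lies in the orbit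
closure of `U`, so the orbit of `U` meets `V`.
-/

/-- A self-map of a topological space is topologically transitive if for any two
nonempty open sets `U, V` some iterate image of `U` meets `V`. -/
def TopTransitive {Y : Type*} [TopologicalSpace Y] (g : Y → Y) : Prop :=
  ∀ U V : Set Y, IsOpen U → IsOpen V → U.Nonempty → V.Nonempty →
    ∃ n : ℕ, (g^[n] '' U ∩ V).Nonempty

/-- A self-map is indecomposable if for any two invariant closed sets with nonempty
interior, their intersection has nonempty interior. -/
def Indecomposable {Y : Type*} [TopologicalSpace Y] (g : Y → Y) : Prop :=
  ∀ A B : Set Y, IsClosed A → IsClosed B → g '' A ⊆ A → g '' B ⊆ B →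
    (interior A).Nonempty → (interior B).Nonempty → (interior (A ∩ B)).Nonempty

/-- The periodic points of `g` are dense. -/
def DensePeriodicPts {Y : Type*} [TopologicalSpace Y] (g : Y → Y) : Prop :=
  Dense {x : Y | ∃ n : ℕ, 1 ≤ n ∧ g^[n] x = x}

open Function Set

section Dynamics

variable {X : Type*}

theorem Function.exists_iterate_iterate_eq_of_mem_periodicPts {f : X → X} {x : X}
    (hx : x ∈ periodicPts f) (n : ℕ) : ∃ j, f^[j] (f^[n] x) = x := by
  obtain ⟨d, hd, hxd⟩ := hx
  rw [← mem_periodicOrbit_iff (mk_mem_periodicPts hd (hxd.apply_iterate n)),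
    periodicOrbit_apply_iterate_eq ⟨d, hd, hxd⟩]
  exact self_mem_periodicOrbit ⟨d, hd, hxd⟩

variable [TopologicalSpace X] {f : X → X}

theorem densePeriodicPts_iff_dense_periodicPts : DensePeriodicPts f ↔ Dense (periodicPts f) :=
  Iff.rfl

theorem Dense.subset_of_iterate_mapsTo (hper : Dense (periodicPts f)) {A W : Set X}
    (hA : IsClosed A) (hfA : MapsTo f A A) (hW : IsOpen W) {n : ℕ} (hWA : MapsTo f^[n] W A) :
    W ⊆ A := by
  have hperW : W ∩ periodicPts f ⊆ A := by
    rintro p ⟨hpW, hp⟩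
    obtain ⟨j, hj⟩ := exists_iterate_iterate_eq_of_mem_periodicPts hp n
    exact hj ▸ hfA.iterate j (hWA hpW)
  exact (hper.open_subset_closure_inter hW).trans (hA.closure_subset_iff.2 hperW)

def orbitClosure (f : X → X) (S : Set X) : Set X :=
  closure (⋃ n, f^[n] '' S)

theorem isClosed_orbitClosure (S : Set X) : IsClosed (orbitClosure f S) :=
  isClosed_closure

theorem subset_orbitClosure (S : Set X) : S ⊆ orbitClosure f S :=
  fun x hx ↦ subset_closure (mem_iUnion.2 ⟨0, x, hx, rfl⟩)

theorem mapsTo_orbitClosure (hf : Continuous f) (S : Set X) :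
    MapsTo f (orbitClosure f S) (orbitClosure f S) := by
  refine MapsTo.closure ?_ hf
  rintro _ ⟨_, ⟨n, rfl⟩, x, hx, rfl⟩
  exact mem_iUnion.2 ⟨n + 1, x, hx, iterate_succ_apply' f n x⟩

theorem IsOpen.exists_iterate_image_inter_nonempty {S W : Set X} (hW : IsOpen W)
    (hne : W.Nonempty) (hWS : W ⊆ orbitClosure f S) : ∃ n, (f^[n] '' S ∩ W).Nonempty := by
  have : ((⋃ n, f^[n] '' S) ∩ W).Nonempty :=
    (closure_inter_open_nonempty_iff hW).1 (hne.mono (subset_inter hWS subset_rfl))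
  simpa only [iUnion_inter, nonempty_iUnion] using this

theorem TopTransitive.indecomposable (hf : Continuous f) (htr : TopTransitive f)
    (hper : DensePeriodicPts f) : Indecomposable f := by
  rw [densePeriodicPts_iff_dense_periodicPts] at hper
  intro A B hA hB hfA hfB hAi hBi
  obtain ⟨n, _, ⟨x, hxA, rfl⟩, hxB⟩ := htr _ _ isOpen_interior isOpen_interior hAi hBi
  set W := interior A ∩ f^[n] ⁻¹' interior B
  have hW : IsOpen W := isOpen_interior.inter (isOpen_interior.preimage (hf.iterate n))
  have hWB : W ⊆ B := hper.subset_of_iterate_mapsTo hB (mapsTo_iff_image_subset.2 hfB) hW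
    fun y hy ↦ interior_subset hy.2
  exact ⟨x, interior_maximal (subset_inter (fun y hy ↦ interior_subset hy.1) hWB) hW ⟨hxA, hxB⟩⟩

theorem Indecomposable.topTransitive (hf : Continuous f) (hind : Indecomposable f)
    (hper : DensePeriodicPts f) : TopTransitive f := by
  rw [densePeriodicPts_iff_dense_periodicPts] at hper
  intro U V hU hV hUne hVne
  set A := orbitClosure f U
  set W := interior (A ∩ orbitClosure f V)
  have hWne : W.Nonempty :=
    hind _ _ (isClosed_orbitClosure U) (isClosed_orbitClosure V)
      (mapsTo_orbitClosure hf U).image_subset (mapsTo_orbitClosure hf V).image_subset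
      (hUne.mono (interior_maximal (subset_orbitClosure U) hU))
      (hVne.mono (interior_maximal (subset_orbitClosure V) hV))
  obtain ⟨m, _, ⟨z, hzV, rfl⟩, hzW⟩ := isOpen_interior.exists_iterate_image_inter_nonempty hWne
    (interior_subset.trans inter_subset_right)
  set V' := V ∩ f^[m] ⁻¹' W
  have hV' : IsOpen V' := hV.inter (isOpen_interior.preimage (hf.iterate m))
  have hV'A : V' ⊆ A := hper.subset_of_iterate_mapsTo (isClosed_orbitClosure U)
    (mapsTo_orbitClosure hf U) hV' fun y hy ↦ (interior_subset hy.2).1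
  obtain ⟨n, hn⟩ := hV'.exists_iterate_image_inter_nonempty ⟨z, hzV, hzW⟩ hV'A
  exact ⟨n, hn.mono (inter_subset_inter_right _ inter_subset_left)⟩

end Dynamics

theorem transitive_and_densePeriodic_iff_indecomposable_and_densePeriodic
    {X : Type*} [MetricSpace X] (f : X → X) (hf : Continuous f) :
    (TopTransitive f ∧ DensePeriodicPts f) ↔ (Indecomposable f ∧ DensePeriodicPts f) :=
  ⟨fun ⟨htr, hper⟩ ↦ ⟨htr.indecomposable hf hper, hper⟩,
    fun ⟨hind, hper⟩ ↦ ⟨hind.topTransitive hf hper, hper⟩⟩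
end

section
/- Let X be a metric space with infinitely many points and f : X → X a continuous map. Then f is Devaney chaotic (i.e., f is topologically transitive, has a dense set of periodic points, and has sensitive dependence on initial conditions) if and only if f is indecomposable and has a dense set of periodic points. -/
/-- Sensitive dependence on initial conditions. -/
def Sensitive {Y : Type*} [MetricSpace Y] (g : Y → Y) : Prop :=
  ∃ δ : ℝ, 0 < δ ∧ ∀ x : Y, ∀ ε : ℝ, 0 < ε →
    ∃ y : Y, dist x y < ε ∧ ∃ n : ℕ, δ < dist (g^[n] x) (g^[n] y)

/-- Devaney chaos: transitivity, dense periodic points, and sensitivity. -/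
def DevaneyChaotic {Y : Type*} [MetricSpace Y] (g : Y → Y) : Prop :=
  TopTransitive g ∧ DensePeriodicPts g ∧ Sensitive g

open Function Set Metric

def forwardOrbit {α : Type*} (f : α → α) (s : Set α) : Set α :=
  ⋃ n, f^[n] '' s

section ForwardOrbit

variable {α : Type*} {f : α → α} {s A : Set α} {x : α}

lemma iterate_mem_forwardOrbit (hx : x ∈ s) (n : ℕ) : f^[n] x ∈ forwardOrbit f s :=
  mem_iUnion.mpr ⟨n, mem_image_of_mem _ hx⟩

lemma subset_forwardOrbit : s ⊆ forwardOrbit f s :=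
  fun _ hx => iterate_mem_forwardOrbit hx 0

lemma mapsTo_forwardOrbit : MapsTo f (forwardOrbit f s) (forwardOrbit f s) := by
  rintro _ ⟨_, ⟨n, rfl⟩, x, hx, rfl⟩
  simpa only [← iterate_succ_apply' f n x] using iterate_mem_forwardOrbit hx (n + 1)

lemma forwardOrbit_subset_of_mapsTo (hA : MapsTo f A A) (hs : s ⊆ A) : forwardOrbit f s ⊆ A :=
  iUnion_subset fun n => (hA.iterate n).image_subset.trans' (image_mono hs)

lemma forwardOrbit_singleton (f : α → α) (x : α) : forwardOrbit f {x} = range (f^[·] x) := by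
  simp only [forwardOrbit, image_singleton, iUnion_singleton_eq_range]

lemma finite_forwardOrbit_singleton (hx : x ∈ periodicPts f) : (forwardOrbit f {x}).Finite := by
  rw [forwardOrbit_singleton]
  refine ((finite_Iio (minimalPeriod f x)).image (f^[·] x)).subset ?_
  rintro _ ⟨n, rfl⟩
  exact ⟨n % minimalPeriod f x, Nat.mod_lt _ (minimalPeriod_pos_of_mem_periodicPts hx),
    iterate_mod_minimalPeriod_eq⟩

lemma mem_of_iterate_mem_of_mapsTo (hA : MapsTo f A A) (hx : x ∈ periodicPts f) {n : ℕ}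
    (hn : f^[n] x ∈ A) : x ∈ A := by
  obtain ⟨p, hp, hper⟩ := hx
  have hback : f^[p * n - n] (f^[n] x) = x := by
    rw [← iterate_add_apply, Nat.sub_add_cancel (Nat.le_mul_of_pos_left n hp)]
    exact hper.mul_const n
  exact hback ▸ hA.iterate _ hn

lemma disjoint_forwardOrbit_singleton {y : α} (hy : y ∈ periodicPts f)
    (hxy : y ∉ forwardOrbit f {x}) : Disjoint (forwardOrbit f {x}) (forwardOrbit f {y}) := by
  rw [disjoint_right, forwardOrbit_singleton]
  rintro _ ⟨n, rfl⟩ hn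
  exact hxy (mem_of_iterate_mem_of_mapsTo mapsTo_forwardOrbit hy hn)

end ForwardOrbit

lemma topTransitive_iff {Y : Type*} [TopologicalSpace Y] {g : Y → Y} :
    TopTransitive g ↔ ∀ U V : Set Y, IsOpen U → IsOpen V → U.Nonempty → V.Nonempty →
      (forwardOrbit g U ∩ V).Nonempty := by
  simp only [TopTransitive, forwardOrbit, iUnion_inter, nonempty_iUnion]

section Topological

variable {Y : Type*} [TopologicalSpace Y] {g : Y → Y}

lemma TopTransitive.eq_univ_of_mapsTo (hT : TopTransitive g) {A : Set Y} (hA : IsClosed A)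
    (hgA : MapsTo g A A) (hAi : (interior A).Nonempty) : A = univ := by
  by_contra hne
  obtain ⟨y, hyA, hyAc⟩ := topTransitive_iff.mp hT _ _ isOpen_interior hA.isOpen_compl hAi
    (nonempty_compl.mpr hne)
  exact hyAc (forwardOrbit_subset_of_mapsTo hgA interior_subset hyA)

lemma TopTransitive.indecomposable_s7 (hT : TopTransitive g) : Indecomposable g := by
  intro A B hA hB hgA hgB hAi hBi
  rw [hT.eq_univ_of_mapsTo hB (mapsTo_iff_image_subset.mpr hgB) hBi, inter_univ]
  exact hAi

lemma mapsTo_closure_forwardOrbit (hg : Continuous g) (s : Set Y) :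
    MapsTo g (closure (forwardOrbit g s)) (closure (forwardOrbit g s)) :=
  mapsTo_forwardOrbit.closure hg

lemma interior_closure_forwardOrbit_nonempty {U : Set Y} (hU : IsOpen U) (hUne : U.Nonempty) :
    (interior (closure (forwardOrbit g U))).Nonempty :=
  hUne.mono (interior_maximal (subset_forwardOrbit.trans subset_closure) hU)

lemma Indecomposable.topTransitive_s7 (hg : Continuous g) (hI : Indecomposable g)
    (hP : DensePeriodicPts g) : TopTransitive g := by
  refine topTransitive_iff.mpr fun U V hU hV hUne hVne => ?_
  by_contra hUV
  set A := closure (forwardOrbit g U)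
  set B := closure (forwardOrbit g (V ∩ periodicPts g))
  have hVB : V ⊆ B := (hP.open_subset_closure_inter hV).trans (closure_mono subset_forwardOrbit)
  obtain ⟨w, hw⟩ := hI A B isClosed_closure isClosed_closure
    (mapsTo_closure_forwardOrbit hg U).image_subset
    (mapsTo_closure_forwardOrbit hg _).image_subset
    (interior_closure_forwardOrbit_nonempty hU hUne) (hVne.mono (interior_maximal hVB hV))
  obtain ⟨_, hyAB, _, ⟨n, rfl⟩, p, ⟨hpV, hpP⟩, rfl⟩ :=
    mem_closure_iff.mp (interior_subset hw).2 _ isOpen_interior hw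
  have hpA : p ∈ A := mem_of_iterate_mem_of_mapsTo (mapsTo_closure_forwardOrbit hg U) hpP
    (interior_subset hyAB).1
  exact hUV (inter_comm V _ ▸ mem_closure_iff.mp hpA V hV hpV)

end Topological

lemma Dense.infinite_of_t1Space {Y : Type*} [TopologicalSpace Y] [T1Space Y] [Infinite Y]
    {s : Set Y} (hs : Dense s) : s.Infinite := fun hfin =>
  infinite_univ (hs.closure_eq ▸ hfin.isClosed.closure_eq.symm ▸ hfin)

section Metric

variable {X : Type*} [MetricSpace X]

lemma Set.Finite.exists_pos_forall_le_dist {s t : Set X} (hs : s.Finite) (ht : t.Finite)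
    (hst : Disjoint s t) : ∃ δ > 0, ∀ a ∈ s, ∀ b ∈ t, δ ≤ dist a b := by
  obtain ⟨r, hr, h⟩ := Metric.exists_pos_forall_lt_edist hs.isCompact ht.isClosed hst
  refine ⟨r, hr, fun a ha b hb => ?_⟩
  have := h a ha b hb
  rw [edist_nndist, ENNReal.coe_lt_coe] at this
  exact_mod_cast this.le

lemma forall_half_le_dist_or_forall_half_le_dist {s t : Set X} {δ : ℝ}
    (h : ∀ a ∈ s, ∀ b ∈ t, δ ≤ dist a b) (x : X) :
    (∀ a ∈ s, δ / 2 ≤ dist x a) ∨ ∀ b ∈ t, δ / 2 ≤ dist x b := by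
  by_contra! ⟨⟨a, ha, hxa⟩, b, hb, hxb⟩
  linarith [h a ha b hb, dist_triangle_left a b x]

variable {f : X → X}

lemma DensePeriodicPts.exists_pos_forall_exists_orbit_far [Infinite X] (hP : DensePeriodicPts f) :
    ∃ D > 0, ∀ x, ∃ c, ∀ y ∈ forwardOrbit f {c}, D ≤ dist x y := by
  have hPinf : (periodicPts f).Infinite := Dense.infinite_of_t1Space hP
  obtain ⟨p, hp⟩ := hPinf.nonempty
  obtain ⟨q, hq, hqp⟩ := (hPinf.sdiff (finite_forwardOrbit_singleton hp)).nonempty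
  obtain ⟨δ, hδ, hsep⟩ := (finite_forwardOrbit_singleton hp).exists_pos_forall_le_dist
    (finite_forwardOrbit_singleton hq) (disjoint_forwardOrbit_singleton hq hqp)
  refine ⟨δ / 2, half_pos hδ, fun x => ?_⟩
  rcases forall_half_le_dist_or_forall_half_le_dist hsep x with h | h
  exacts [⟨p, h⟩, ⟨q, h⟩]

lemma exists_dvd_add_le (k : ℕ) {n : ℕ} (hn : 0 < n) : ∃ d ≤ n, n ∣ k + d := by
  refine ⟨n - k % n, Nat.sub_le _ _, k / n + 1, ?_⟩
  have := Nat.div_add_mod k n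
  have := Nat.mod_lt k hn
  rw [mul_add, mul_one]
  omega

variable {D : ℝ}

/-- Banks' argument: take a periodic point `r` near `x`, of period `n`, and by transitivity a point
`z` near `x` whose orbit follows that of `c` for `n + 1` steps from some time `k`. At the first
multiple `m ≥ k` of `n`, `f^[m] r = r` is near `x` while `f^[m] z` is near the orbit of `c`. -/
lemma exists_near_pair_far_iterates (hf : Continuous f) (hT : TopTransitive f)
    (hP : DensePeriodicPts f) (hfar : ∀ x, ∃ c, ∀ y ∈ forwardOrbit f {c}, D ≤ dist x y) (x : X)
    {ε : ℝ} (hε : 0 < ε) (hεD : ε ≤ D / 4) :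
    ∃ r z, dist x r < ε ∧ dist x z < ε ∧ ∃ m, D / 2 < dist (f^[m] r) (f^[m] z) := by
  obtain ⟨r, ⟨n, hn, hr⟩, hxr⟩ := Metric.mem_closure_iff.mp (hP x) ε hε
  obtain ⟨c, hc⟩ := hfar x
  set W := ⋂ i ∈ Iic n, f^[i] ⁻¹' ball (f^[i] c) (D / 4)
  have hWo : IsOpen W :=
    (finite_Iic n).isOpen_biInter fun i _ => isOpen_ball.preimage (hf.iterate i)
  have hcW : c ∈ W := mem_iInter₂.mpr fun i _ => mem_ball_self (by linarith)
  obtain ⟨k, _, ⟨z, hz, rfl⟩, hzW⟩ := hT _ W isOpen_ball hWo ⟨x, mem_ball_self hε⟩ ⟨c, hcW⟩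
  obtain ⟨d, hdn, hdvd⟩ := exists_dvd_add_le k hn
  have hrm : f^[k + d] r = r := IsPeriodicPt.trans_dvd hr hdvd
  have hzc : dist (f^[k + d] z) (f^[d] c) < D / 4 := by
    rw [add_comm, iterate_add_apply]
    exact mem_iInter₂.mp hzW d hdn
  have hxc : D ≤ dist x (f^[d] c) := hc _ (iterate_mem_forwardOrbit (mem_singleton c) d)
  refine ⟨r, z, hxr, mem_ball'.mp hz, k + d, ?_⟩
  rw [hrm]
  linarith [dist_triangle4 x r (f^[k + d] z) (f^[d] c)]

lemma sensitive_of_forall_exists_orbit_far (hf : Continuous f) (hT : TopTransitive f)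
    (hP : DensePeriodicPts f) (hD : 0 < D)
    (hfar : ∀ x, ∃ c, ∀ y ∈ forwardOrbit f {c}, D ≤ dist x y) : Sensitive f := by
  refine ⟨D / 4, by positivity, fun x ε hε => ?_⟩
  obtain ⟨r, z, hxr, hxz, m, hrz⟩ := exists_near_pair_far_iterates hf hT hP hfar x
    (lt_min hε (by positivity)) (min_le_right _ _)
  by_cases hr : D / 4 < dist (f^[m] x) (f^[m] r)
  · exact ⟨r, hxr.trans_le (min_le_left _ _), m, hr⟩
  · refine ⟨z, hxz.trans_le (min_le_left _ _), m, ?_⟩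
    linarith [dist_triangle_left (f^[m] r) (f^[m] z) (f^[m] x)]

end Metric

theorem devaneyChaotic_iff_indecomposable_and_densePeriodic
    {X : Type*} [MetricSpace X] [Infinite X] (f : X → X) (hf : Continuous f) :
    DevaneyChaotic f ↔ (Indecomposable f ∧ DensePeriodicPts f) := by
  constructor
  · rintro ⟨hT, hP, -⟩
    exact ⟨hT.indecomposable_s7, hP⟩
  · rintro ⟨hI, hP⟩
    have hT := hI.topTransitive_s7 hf hP
    obtain ⟨D, hD, hfar⟩ := hP.exists_pos_forall_exists_orbit_far
    exact ⟨hT, hP, sensitive_of_forall_exists_orbit_far hf hT hP hD hfar⟩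
end

section
/- Let X be a compact metric space and f : X → X a continuous map. If f is indecomposable, then f is weakly indecomposable; that is, there exists a residual subset S ⊆ X such that ω(x) = ω(y) ≠ ∅ for all x, y ∈ S. -/
/-- The ω-limit set of a point: `ω(x) = ⋂ₙ closure {gᵏ(x) : k ≥ n}`. -/
def omegaSet {Y : Type*} [TopologicalSpace Y] (g : Y → Y) (x : Y) : Set Y :=
  ⋂ n : ℕ, closure {y | ∃ k, n ≤ k ∧ g^[k] x = y}

/-- A set is residual if it contains a dense Gδ set. -/
def ResidualSet {Y : Type*} [TopologicalSpace Y] (S : Set Y) : Prop :=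
  ∃ G : Set Y, G ⊆ S ∧ IsGδ G ∧ Dense G

/-- A self-map is weakly indecomposable if there is a residual set on which all points
have the same nonempty ω-limit set. -/
def WeaklyIndecomposable {Y : Type*} [TopologicalSpace Y] (g : Y → Y) : Prop :=
  ∃ S : Set Y, ResidualSet S ∧
    (∀ x ∈ S, ∀ y ∈ S, omegaSet g x = omegaSet g y) ∧
    (∀ x ∈ S, (omegaSet g x).Nonempty)

/-!
Fix an open set `U`. The points whose orbit visits `U` infinitely often form a countable
intersection of open sets `Wₙ = ⋃_{k ≥ n} f⁻ᵏ U`. If every `Wₙ` is dense, generic points have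
`ω(x)` meeting `closure U`. Otherwise the complement of some `Wₙ` is a closed invariant set with
nonempty interior; indecomposability, applied to it and to the forward orbit closure of an
arbitrary open set, shows that orbits entering its interior form a dense open set, on which
`ω(x)` misses `U`. Intersecting over a countable basis yields a residual set on which, by
regularity, all ω-limit sets coincide; they are nonempty by compactness.
-/

open Set Filter Topology TopologicalSpace Function

section

variable {X : Type*} [TopologicalSpace X] {g : X → X} {x : X}

theorem mem_omegaSet_iff_mapClusterPt {y : X} :
    y ∈ omegaSet g x ↔ MapClusterPt y atTop (fun k ↦ g^[k] x) := by
  rw [mapClusterPt_atTop_iff_forall_mem_closure]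
  exact mem_iInter

theorem isClosed_omegaSet (g : X → X) (x : X) : IsClosed (omegaSet g x) :=
  isClosed_iInter fun _ ↦ isClosed_closure

theorem omegaSet_nonempty [CompactSpace X] (g : X → X) (x : X) : (omegaSet g x).Nonempty :=
  let ⟨y, _, hy⟩ := isCompact_univ.exists_mapClusterPt (f := atTop) (u := fun k ↦ g^[k] x)
    (by simp)
  ⟨y, mem_omegaSet_iff_mapClusterPt.2 hy⟩

theorem frequently_iterate_mem_of_omegaSet_inter_nonempty {U : Set X} (hU : IsOpen U)
    (h : (omegaSet g x ∩ U).Nonempty) : ∃ᶠ k in atTop, g^[k] x ∈ U :=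
  let ⟨_, hy, hyU⟩ := h
  (mem_omegaSet_iff_mapClusterPt.1 hy).frequently (hU.mem_nhds hyU)

theorem omegaSet_inter_closure_nonempty_of_frequently [CompactSpace X] {U : Set X}
    (h : ∃ᶠ k in atTop, g^[k] x ∈ U) : (omegaSet g x ∩ closure U).Nonempty :=
  let ⟨y, hyU, hy⟩ := isClosed_closure.isCompact.exists_mapClusterPt_of_frequently
    (h.mono fun _ hk ↦ subset_closure hk)
  ⟨y, mem_omegaSet_iff_mapClusterPt.2 hy, hyU⟩

end

section

variable {X : Type*} [TopologicalSpace X] {f : X → X}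

theorem mapsTo_closure_iUnion_image_iterate (hf : Continuous f) (V : Set X) :
    MapsTo f (closure (⋃ k, f^[k] '' V)) (closure (⋃ k, f^[k] '' V)) := by
  refine MapsTo.closure ?_ hf
  rintro _ ⟨_, ⟨k, rfl⟩, v, hv, rfl⟩
  exact mem_iUnion.2 ⟨k + 1, v, hv, iterate_succ_apply' f k v⟩

theorem Indecomposable.dense_iUnion_preimage_iterate_interior (hind : Indecomposable f)
    (hf : Continuous f) {A : Set X} (hA : IsClosed A) (hfA : f '' A ⊆ A)
    (hA₀ : (interior A).Nonempty) : Dense (⋃ k, f^[k] ⁻¹' interior A) := by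
  refine dense_iff_inter_open.2 fun V hV hV₀ ↦ ?_
  set B := closure (⋃ k, f^[k] '' V)
  have hVB : V ⊆ B := fun v hv ↦ subset_closure (mem_iUnion.2 ⟨0, v, hv, rfl⟩)
  obtain ⟨p, hp⟩ := hind A B hA isClosed_closure hfA
    (mapsTo_closure_iUnion_image_iterate hf V).image_subset hA₀
    (hV₀.mono (interior_maximal hVB hV))
  obtain ⟨_, hq, _, ⟨k, rfl⟩, v, hv, rfl⟩ :=
    mem_closure_iff.1 (interior_subset hp).2 _ isOpen_interior hp
  exact ⟨v, hv, mem_iUnion.2 ⟨k, interior_mono inter_subset_left hq⟩⟩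

end

section

variable {X : Type*} [TopologicalSpace X] [CompactSpace X] {f : X → X}

theorem Indecomposable.exists_residual_omegaSet_inter_closure_nonempty (hind : Indecomposable f)
    (hf : Continuous f) {U : Set X} (hU : IsOpen U) :
    ∃ T ∈ residual X, ∀ x ∈ T, ∀ y ∈ T,
      (omegaSet f x ∩ U).Nonempty → (omegaSet f y ∩ closure U).Nonempty := by
  set W : ℕ → Set X := fun n ↦ ⋃ k ≥ n, f^[k] ⁻¹' U
  have hW : ∀ n, IsOpen (W n) := fun n ↦ isOpen_biUnion fun k _ ↦ hU.preimage (hf.iterate k)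
  by_cases hdense : ∀ n, Dense (W n)
  · refine ⟨⋂ n, W n, countable_iInter_mem.2 fun n ↦ residual_of_dense_open (hW n) (hdense n),
      fun _ _ y hy _ ↦ omegaSet_inter_closure_nonempty_of_frequently ?_⟩
    refine frequently_atTop.2 fun n ↦ ?_
    simpa [W] using mem_iInter.1 hy n
  obtain ⟨n, hn⟩ := not_forall.1 hdense
  have hinv : f '' (W n)ᶜ ⊆ (W n)ᶜ := by
    rintro _ ⟨z, hz, rfl⟩ hfz
    simp only [W, mem_iUnion, mem_preimage, ← iterate_succ_apply] at hfz
    obtain ⟨k, hk, hkU⟩ := hfz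
    exact hz (mem_iUnion₂.2 ⟨k + 1, by omega, hkU⟩)
  have hint : (interior (W n)ᶜ).Nonempty := by
    rw [interior_compl, nonempty_compl]
    exact mt dense_iff_closure_eq.2 hn
  refine ⟨_, residual_of_dense_open (isOpen_iUnion fun k ↦ isOpen_interior.preimage
    (hf.iterate k)) (hind.dense_iUnion_preimage_iterate_interior hf (hW n).isClosed_compl hinv
    hint), fun x hx _ _ hxU ↦ ?_⟩
  obtain ⟨k, hk⟩ := mem_iUnion.1 hx
  obtain ⟨j, hj, hjU⟩ := (frequently_atTop.1
    (frequently_iterate_mem_of_omegaSet_inter_nonempty hU hxU)) (n + k)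
  refine (interior_subset hk (mem_iUnion₂.2 ⟨j - k, by omega, ?_⟩)).elim
  rwa [mem_preimage, ← iterate_add_apply, Nat.sub_add_cancel (by omega)]

end

theorem TopologicalSpace.IsTopologicalBasis.subset_of_inter_nonempty_imp_inter_closure_nonempty
    {X : Type*} [TopologicalSpace X] [RegularSpace X] {B : Set (Set X)}
    (hB : IsTopologicalBasis B) {s t : Set X} (ht : IsClosed t)
    (h : ∀ U ∈ B, (s ∩ U).Nonempty → (t ∩ closure U).Nonempty) : s ⊆ t := by
  intro z hz
  by_contra hzt
  obtain ⟨U, hUB, hzU, hUt⟩ := hB.exists_closure_subset (ht.isOpen_compl.mem_nhds hzt)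
  obtain ⟨w, hwt, hwU⟩ := h U hUB ⟨z, hz, hzU⟩
  exact hUt hwU hwt

theorem indecomposable_implies_weaklyIndecomposable_of_compact
    {X : Type*} [MetricSpace X] [CompactSpace X] (f : X → X) (hf : Continuous f)
    (hind : Indecomposable f) : WeaklyIndecomposable f := by
  have hB := isBasis_countableBasis X
  have : Countable (countableBasis X) := (countable_countableBasis X).to_subtype
  choose T hT hTω using fun U : countableBasis X ↦
    hind.exists_residual_omegaSet_inter_closure_nonempty hf (hB.isOpen U.2)
  have hsubset : ∀ x ∈ ⋂ U, T U, ∀ y ∈ ⋂ U, T U, omegaSet f x ⊆ omegaSet f y :=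
    fun x hx y hy ↦ hB.subset_of_inter_nonempty_imp_inter_closure_nonempty
      (isClosed_omegaSet f y) fun U hU ↦
        hTω ⟨U, hU⟩ x (mem_iInter.1 hx _) y (mem_iInter.1 hy _)
  exact ⟨⋂ U, T U, mem_residual.1 (countable_iInter_mem.2 hT),
    fun x hx y hy ↦ (hsubset x hx y hy).antisymm (hsubset y hy x hx),
    fun x _ ↦ omegaSet_nonempty f x⟩
end
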